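/- Let (p_1, ..., p_n) be a probability vector and suppose new probabilities are formed by p'_1 = p_1 + Σ_{j∈J} α_j p_j and p'_j = (1-α_j) p_j for j in an index set J ⊆ {2,...,n} with α_j ∈ (0,1), and p'_j = p_j otherwise. If p is sorted in nonincreasing order and p'' is the nonincreasing rearrangement of p', then p'' majorizes p, and hence H(p'') ≤ H(p). -/

import Mathlib

/-!
`p'` is `p` with the mass `δ j = α j * p j` moved from each `j ∈ J` onto the largest entry `p 0`.
Every leading block of indices contains `0`, so it gains all of `∑ δ` and loses only part of it;
and the leading block of the sorted `p''` carries at least as much as any set of `p'` of that size.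
For the entropy, concavity of `negMulLog` and `p j ≤ p 0` make the chord slope on
`[p j - δ j, p j]` at least the chord slope on `[p 0, p 0 + ∑ δ]`, so what is gained at the top is
at most what is lost at the sources.
-/

open Finset

theorem Finset.sum_le_sum_of_card_eq_of_forall_le {ι M : Type*} [AddCommMonoid M] [LinearOrder M]
    [IsOrderedAddMonoid M] {s t : Finset ι} {f : ι → M} (hcard : #s = #t)
    (hle : ∀ i ∈ s, ∀ j ∈ t, f i ≤ f j) : ∑ i ∈ s, f i ≤ ∑ j ∈ t, f j := by
  rcases s.eq_empty_or_nonempty with rfl | hs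
  · rw [eq_comm, card_empty, card_eq_zero] at hcard
    simp [hcard]
  obtain ⟨a, ha, hmax⟩ := s.exists_max_image f hs
  calc ∑ i ∈ s, f i ≤ #s • f a := sum_le_card_nsmul s f (f a) hmax
    _ = #t • f a := by rw [hcard]
    _ ≤ ∑ j ∈ t, f j := card_nsmul_le_sum t f (f a) (hle a ha)

theorem Antitone.sum_le_sum_of_isLowerSet {ι M : Type*} [LinearOrder ι] [AddCommMonoid M]
    [LinearOrder M] [IsOrderedCancelAddMonoid M] {f : ι → M} (hf : Antitone f)
    {s t : Finset ι} (ht : IsLowerSet (t : Set ι)) (hcard : #s = #t) :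
    ∑ i ∈ s, f i ≤ ∑ i ∈ t, f i := by
  classical
  rw [← sum_sdiff_le_sum_sdiff]
  refine sum_le_sum_of_card_eq_of_forall_le (card_sdiff_comm hcard) fun i hi j hj ↦ hf ?_
  by_contra! hij
  exact (mem_sdiff.1 hi).2 (ht hij.le (mem_sdiff.1 hj).1)

theorem ConcaveOn.slope_le_slope {𝕜 : Type*} [Field 𝕜] [LinearOrder 𝕜] [IsStrictOrderedRing 𝕜]
    {s : Set 𝕜} {f : 𝕜 → 𝕜} (hf : ConcaveOn 𝕜 s f) {a b c d : 𝕜} (ha : a ∈ s) (hd : d ∈ s)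
    (hab : a < b) (hbc : b ≤ c) (hcd : c < d) : slope f c d ≤ slope f a b := by
  have hs := hf.1.ordConnected
  have hb : b ∈ s := hs.out ha hd ⟨hab.le, hbc.trans hcd.le⟩
  have hc : c ∈ s := hs.out ha hd ⟨hab.le.trans hbc, hcd.le⟩
  calc slope f c d = slope f d c := slope_comm f c d
    _ ≤ slope f d a := hf.slope_anti hd ⟨ha, (hab.trans_le (hbc.trans hcd.le)).ne⟩
        ⟨hc, hcd.ne⟩ (hab.le.trans hbc)
    _ = slope f a d := slope_comm f d a
    _ ≤ slope f a b := hf.slope_anti ha ⟨hb, hab.ne'⟩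
        ⟨hd, (hab.trans_le (hbc.trans hcd.le)).ne'⟩ (hbc.trans hcd.le)

theorem ConcaveOn.sub_le_sum_sub {ι 𝕜 : Type*} [Field 𝕜] [LinearOrder 𝕜] [IsStrictOrderedRing 𝕜]
    {s : Set 𝕜} {f : 𝕜 → 𝕜} (hf : ConcaveOn 𝕜 s f) {J : Finset ι} {x δ : ι → 𝕜} {y : 𝕜}
    (hδ : ∀ j ∈ J, 0 ≤ δ j) (hxy : ∀ j ∈ J, x j ≤ y) (hx : ∀ j ∈ J, x j - δ j ∈ s)
    (hy : y + ∑ j ∈ J, δ j ∈ s) :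
    f (y + ∑ j ∈ J, δ j) - f y ≤ ∑ j ∈ J, (f (x j) - f (x j - δ j)) := by
  rcases (sum_nonneg hδ).eq_or_lt with hS0 | hSpos
  · have hδ0 : ∀ j ∈ J, δ j = 0 := (sum_eq_zero_iff_of_nonneg hδ).1 hS0.symm
    rw [← hS0, add_zero, sub_self]
    exact (sum_eq_zero fun j hj ↦ by simp [hδ0 j hj]).ge
  have hjump : ∀ j ∈ J, slope f y (y + ∑ j ∈ J, δ j) * δ j ≤ f (x j) - f (x j - δ j) := by
    intro j hj
    rcases (hδ j hj).eq_or_lt with h0 | hpos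
    · simp [← h0]
    have hslope := hf.slope_le_slope (hx j hj) hy (sub_lt_self _ hpos) (hxy j hj)
      (lt_add_of_pos_right y hSpos)
    rw [slope_def_field (a := x j - δ j), sub_sub_cancel, le_div_iff₀ hpos] at hslope
    exact hslope
  calc f (y + ∑ j ∈ J, δ j) - f y = slope f y (y + ∑ j ∈ J, δ j) * ∑ j ∈ J, δ j := by
        rw [slope_def_field, add_sub_cancel_left, div_mul_cancel₀ _ hSpos.ne']
    _ ≤ ∑ j ∈ J, (f (x j) - f (x j - δ j)) := by
        rw [mul_sum]
        exact sum_le_sum hjump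

structure IsMassTransfer {ι : Type*} (p q δ : ι → ℝ) (z : ι) (J : Finset ι) : Prop where
  not_mem : z ∉ J
  apply_target : q z = p z + ∑ j ∈ J, δ j
  apply_source : ∀ j ∈ J, q j = p j - δ j
  apply_of_ne : ∀ i, i ≠ z → i ∉ J → q i = p i

namespace IsMassTransfer

variable {ι : Type*} {p q δ : ι → ℝ} {z : ι} {J : Finset ι}

theorem sum_sub_eq [DecidableEq ι] (h : IsMassTransfer p q δ z J) (φ : ℝ → ℝ) {F : Finset ι}
    (hzF : z ∈ F) :
    ∑ i ∈ F, (φ (q i) - φ (p i)) = φ (q z) - φ (p z) + ∑ j ∈ F ∩ J, (φ (q j) - φ (p j)) := by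
  have hFJ : F ∩ J = (F.erase z).filter (· ∈ J) := by
    ext i
    simp only [mem_inter, mem_filter, mem_erase]
    exact ⟨fun hi ↦ ⟨⟨ne_of_mem_of_not_mem hi.2 h.not_mem, hi.1⟩, hi.2⟩,
      fun hi ↦ ⟨hi.1.2, hi.2⟩⟩
  rw [← add_sum_erase _ _ hzF, hFJ, sum_filter_of_ne]
  intro i hi hne
  by_contra hiJ
  exact hne (by rw [h.apply_of_ne i (mem_erase.1 hi).1 hiJ, sub_self])

theorem sum_le_sum (h : IsMassTransfer p q δ z J) (hδ : ∀ j ∈ J, 0 ≤ δ j) {F : Finset ι}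
    (hzF : z ∈ F) : ∑ i ∈ F, p i ≤ ∑ i ∈ F, q i := by
  classical
  have hgain : ∑ j ∈ F ∩ J, δ j ≤ ∑ j ∈ J, δ j :=
    sum_le_sum_of_subset_of_nonneg inter_subset_right fun j hj _ ↦ hδ j hj
  have hdiff := h.sum_sub_eq id hzF
  have hloss : ∑ j ∈ F ∩ J, (q j - p j) = -∑ j ∈ F ∩ J, δ j := by
    rw [← sum_neg_distrib]
    exact sum_congr rfl fun j hj ↦ by rw [h.apply_source j (mem_inter.1 hj).2]; ring
  simp only [id] at hdiff
  rw [hloss, h.apply_target, sum_sub_distrib] at hdiff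
  linarith

theorem sum_comp_le [Fintype ι] (h : IsMassTransfer p q δ z J) {s : Set ℝ} {f : ℝ → ℝ}
    (hf : ConcaveOn ℝ s f) (hδ : ∀ j ∈ J, 0 ≤ δ j) (hpz : ∀ j ∈ J, p j ≤ p z)
    (hqJ : ∀ j ∈ J, q j ∈ s) (hqz : q z ∈ s) : ∑ i, f (q i) ≤ ∑ i, f (p i) := by
  classical
  have hsrc : ∑ j ∈ J, (f (q j) - f (p j)) = -∑ j ∈ J, (f (p j) - f (p j - δ j)) := by
    rw [← sum_neg_distrib]
    exact sum_congr rfl fun j hj ↦ by rw [h.apply_source j hj, neg_sub]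
  have hdiff := h.sum_sub_eq f (mem_univ z)
  rw [univ_inter, hsrc, sum_sub_distrib, h.apply_target] at hdiff
  have hgain := hf.sub_le_sum_sub hδ hpz (fun j hj ↦ h.apply_source j hj ▸ hqJ j hj)
    (h.apply_target ▸ hqz)
  linarith

end IsMassTransfer

theorem stmt6 (n : ℕ) (hn : 0 < n) (p p' p'' : Fin n → ℝ)
    (hp0 : ∀ i, 0 ≤ p i)
    (hpa : Antitone p)
    (J : Finset (Fin n)) (hJ : ∀ j ∈ J, j ≠ ⟨0, hn⟩)
    (α : Fin n → ℝ) (hα : ∀ j ∈ J, α j ∈ Set.Ioo (0 : ℝ) 1)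
    (hp'0 : p' ⟨0, hn⟩ = p ⟨0, hn⟩ + ∑ j ∈ J, α j * p j)
    (hp'J : ∀ j ∈ J, p' j = (1 - α j) * p j)
    (hp'other : ∀ j, j ≠ ⟨0, hn⟩ → j ∉ J → p' j = p j)
    (hperm : ∃ σ : Equiv.Perm (Fin n), ∀ i, p'' i = p' (σ i))
    (hp''a : Antitone p'') :
    (∀ k : ℕ, (∑ i ∈ Finset.univ.filter (fun i : Fin n => (i : ℕ) < k), p i) ≤
      ∑ i ∈ Finset.univ.filter (fun i : Fin n => (i : ℕ) < k), p'' i) ∧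
    (∑ i, Real.negMulLog (p'' i)) ≤ ∑ i, Real.negMulLog (p i) := by
  obtain ⟨σ, hσ⟩ := hperm
  have hδ : ∀ j ∈ J, 0 ≤ α j * p j := fun j hj ↦ mul_nonneg (hα j hj).1.le (hp0 j)
  have hT : IsMassTransfer p p' (fun j ↦ α j * p j) ⟨0, hn⟩ J :=
    ⟨fun h ↦ hJ _ h rfl, hp'0, fun j hj ↦ by rw [hp'J j hj]; ring, hp'other⟩
  refine ⟨fun k ↦ ?_, ?_⟩
  · set F := univ.filter (fun i : Fin n => (i : ℕ) < k)
    rcases Nat.eq_zero_or_pos k with rfl | hk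
    · simp [F]
    have hF : IsLowerSet (F : Set (Fin n)) := fun i j hji hi ↦ by
      simp only [F, coe_filter, mem_univ, true_and, Set.mem_ofPred_eq] at hi ⊢
      exact lt_of_le_of_lt hji hi
    calc ∑ i ∈ F, p i ≤ ∑ i ∈ F, p' i := hT.sum_le_sum hδ (by simpa [F] using hk)
      _ = ∑ i ∈ F.map σ.symm.toEmbedding, p'' i := by simp [hσ]
      _ ≤ ∑ i ∈ F, p'' i := hp''a.sum_le_sum_of_isLowerSet hF (card_map _)
  · rw [show ∑ i, Real.negMulLog (p'' i) = ∑ i, Real.negMulLog (p' i) by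
      simp only [hσ]; exact Equiv.sum_comp σ fun i ↦ Real.negMulLog (p' i)]
    refine hT.sum_comp_le Real.concaveOn_negMulLog hδ (fun j _ ↦ hpa (Nat.zero_le j)) ?_ ?_
    · intro j hj
      rw [hp'J j hj]
      exact mul_nonneg (sub_nonneg.2 (hα j hj).2.le) (hp0 j)
    · rw [hp'0]
      exact add_nonneg (hp0 _) (sum_nonneg hδ)
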